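/- Let Γ be a signed graph on n vertices and let 1 ≤ k ≤ n−1. If Γ is sign-symmetric (i.e., Γ is switching isomorphic to its negation −Γ), then its k-token signed graph F_k(Γ) is also sign-symmetric (i.e., F_k(Γ) is switching isomorphic to −F_k(Γ)). -/

import Mathlib

open scoped Classical

/-- A signed graph: a simple graph together with a signature assigning a sign `±1`
(an element of `ℤˣ`) to each pair of vertices (only the values on edges are relevant). -/
structure SignedGraph (V : Type*) where
  G : SimpleGraph V
  sign : V → V → ℤˣ
  sign_symm : ∀ u v, sign u v = sign v u

namespace SignedGraph

variable {V W : Type*}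

/-- The sign function, as a function on unordered pairs. -/
def esign (Γ : SignedGraph V) : Sym2 V → ℤˣ :=
  Sym2.lift ⟨Γ.sign, Γ.sign_symm⟩

/-- The sign of a walk: the product of the signs of its edges. -/
def walkSign (Γ : SignedGraph V) {u v : V} (p : Γ.G.Walk u v) : ℤˣ :=
  (p.edges.map Γ.esign).prod

/-- A signed graph is balanced if every cycle is positive. -/
def Balanced (Γ : SignedGraph V) : Prop :=
  ∀ ⦃u : V⦄ (p : Γ.G.Walk u u), p.IsCycle → Γ.walkSign p = 1

/-- Switching at a vertex subset `U`: reverse the sign of every edge with exactly one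
endpoint in `U`. -/
noncomputable def switch (Γ : SignedGraph V) (U : Set V) : SignedGraph V where
  G := Γ.G
  sign u v := (if u ∈ U then (-1 : ℤˣ) else 1) * (if v ∈ U then (-1 : ℤˣ) else 1) * Γ.sign u v
  sign_symm u v := by
    rw [Γ.sign_symm u v, mul_comm (if u ∈ U then (-1 : ℤˣ) else 1) (if v ∈ U then (-1 : ℤˣ) else 1)]

/-- Two signed graphs on the same vertex set are "the same signed graph" when they have the
same underlying graph and the same signature on every edge. -/
def SEq (Γ Γ' : SignedGraph V) : Prop :=
  Γ.G = Γ'.G ∧ ∀ u v, Γ.G.Adj u v → Γ.sign u v = Γ'.sign u v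

/-- Switching equivalence of two signed graphs on the same vertex set. -/
def SwitchEquiv (Γ Γ' : SignedGraph V) : Prop :=
  ∃ U : Set V, (Γ.switch U).SEq Γ'

/-- A sign-preserving isomorphism of signed graphs. -/
structure Iso (Γ : SignedGraph V) (Γ' : SignedGraph W) where
  toEquiv : V ≃ W
  adj_iff : ∀ u v, Γ.G.Adj u v ↔ Γ'.G.Adj (toEquiv u) (toEquiv v)
  sign_eq : ∀ u v, Γ.G.Adj u v → Γ.sign u v = Γ'.sign (toEquiv u) (toEquiv v)

/-- Switching isomorphism: `Γ'` is isomorphic to a switching of `Γ`. -/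
def SwitchIso (Γ : SignedGraph V) (Γ' : SignedGraph W) : Prop :=
  ∃ U : Set V, Nonempty ((Γ.switch U).Iso Γ')

/-- The negation of a signed graph: all edge signs reversed. -/
def neg (Γ : SignedGraph V) : SignedGraph V where
  G := Γ.G
  sign u v := -Γ.sign u v
  sign_symm u v := by rw [Γ.sign_symm]

variable [DecidableEq V]

/-- The underlying graph of the `k`-token graph: vertices are the `k`-subsets of `V`,
with `A ~ B` when `A Δ B = {a, b}`, `a ∈ A`, `b ∈ B` and `a ~ b` in `G`. -/
def tokenAdj (G : SimpleGraph V) (k : ℕ) : SimpleGraph {A : Finset V // A.card = k} where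
  Adj A B := ∃ a b, a ∈ A.1 ∧ b ∈ B.1 ∧ G.Adj a b ∧ symmDiff A.1 B.1 = {a, b}
  symm := by
    constructor
    rintro A B ⟨a, b, ha, hb, hab, hs⟩
    exact ⟨b, a, hb, ha, hab.symm, by rw [symmDiff_comm, hs, Finset.pair_comm]⟩
  loopless := by
    constructor
    rintro A ⟨a, b, ha, hb, hab, hs⟩
    rw [symmDiff_self] at hs
    have h : a ∈ ({a, b} : Finset V) := Finset.mem_insert_self a {b}
    rw [← hs] at h
    simp at h

/-- The `k`-token signed graph: the edge obtained by moving a token along `ab`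
carries the sign of `ab`. -/
def token (Γ : SignedGraph V) (k : ℕ) : SignedGraph {A : Finset V // A.card = k} where
  G := tokenAdj Γ.G k
  sign A B := ∏ a ∈ A.1 \ B.1, ∏ b ∈ B.1 \ A.1, Γ.sign a b
  sign_symm A B := by
    rw [Finset.prod_comm]
    exact Finset.prod_congr rfl fun b _ => Finset.prod_congr rfl fun a _ => Γ.sign_symm a b

/-- The signed adjacency matrix (over `ℝ`). -/
noncomputable def adjMatrix (Γ : SignedGraph V) [Fintype V] : Matrix V V ℝ :=
  Matrix.of fun u v => if Γ.G.Adj u v then ((Γ.sign u v : ℤ) : ℝ) else 0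

/-- The signed Laplacian matrix `L = D - A` (over `ℝ`). -/
noncomputable def lapMatrix (Γ : SignedGraph V) [Fintype V] : Matrix V V ℝ :=
  Matrix.diagonal (fun v => (Γ.G.degree v : ℝ)) - Γ.adjMatrix

/-- The quantity `ℓ_m(Γ)`. -/
noncomputable def ellm (Γ : SignedGraph V) [Fintype V] (m : ℕ) : ℝ :=
  (∑ r ∈ Finset.range (m + 1),
      ((Γ.G.adjMatrix ℝ ^ r).trace - (Γ.adjMatrix ^ r).trace)) /
  (∑ r ∈ Finset.range (m + 1),
      ((Γ.G.adjMatrix ℝ ^ r).trace + |(Γ.adjMatrix ^ r).trace|))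

/-- The unbalance level `ℓ(Γ) = max {ℓ_{n-1}(Γ), ℓ_n(Γ)}`. -/
noncomputable def unbalanceLevel (Γ : SignedGraph V) [Fintype V] : ℝ :=
  max (Γ.ellm (Fintype.card V - 1)) (Γ.ellm (Fintype.card V))

/-- The frustration index: the minimum number of negative edges whose deletion yields a
balanced signed graph. -/
noncomputable def frustrationIndex (Γ : SignedGraph V) : ℕ :=
  sInf {m : ℕ | ∃ F : Finset (Sym2 V), F.card = m ∧ ↑F ⊆ Γ.G.edgeSet ∧
    (∀ e ∈ F, Γ.esign e = -1) ∧
    Balanced ⟨Γ.G.deleteEdges ↑F, Γ.sign, Γ.sign_symm⟩}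

/-- The signed complement of a balanced signed graph, with respect to a switching function
`s` witnessing balance (`A_σ = S A S`): the signed graph on the complement graph with
adjacency matrix `S Ā S`, i.e. with sign `s u * s v` on each complement edge. -/
def scompl (Γ : SignedGraph V) (s : V → ℤˣ) : SignedGraph V where
  G := Γ.Gᶜ
  sign u v := s u * s v
  sign_symm u v := mul_comm _ _

/-- The real diagonal `±1` matrix associated with `s : V → ℤˣ`. -/
noncomputable def diagS [Fintype V] (s : V → ℤˣ) : Matrix V V ℝ :=
  Matrix.diagonal fun v => ((s v : ℤ) : ℝ)

end SignedGraph

/-- The all-positive signed complete graph on `V`. -/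
def allPos (V : Type*) : SignedGraph V := ⟨⊤, fun _ _ => 1, fun _ _ => rfl⟩

/-- The `(n; 1, k)`-binomial matrix. -/
noncomputable def binomB (V : Type*) [Fintype V] [DecidableEq V] (k : ℕ) :
    Matrix {A : Finset V // A.card = k} V ℝ :=
  Matrix.of fun A v => if v ∈ A.1 then 1 else 0

/-- The `(n; k₁, k₂)`-binomial matrix. -/
noncomputable def binomB2 (V : Type*) [Fintype V] [DecidableEq V] (k₁ k₂ : ℕ) :
    Matrix {A : Finset V // A.card = k₂} {A : Finset V // A.card = k₁} ℝ :=
  Matrix.of fun A X => if X.1 ⊆ A.1 then 1 else 0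

/-! If `Γ^U ≅ -Γ`, switch `F_k(Γ)` at the `k`-subsets meeting `U` an odd number of times.
Along an edge `A ~ B` of `F_k(Γ)` that moves a token from `a` to `b`, the parities of `|A ∩ U|`
and `|B ∩ U|` differ exactly when `ab` crosses `U`, so this switching yields `F_k(Γ^U)`.
Negation commutes with `F_k`, and an isomorphism of signed graphs induces one of their token
graphs, whence `F_k(Γ)^𝒰 = F_k(Γ^U) ≅ F_k(-Γ) = -F_k(Γ)`. -/

namespace Finset

variable {α β : Type*} [DecidableEq α]

theorem sdiff_eq_singleton_of_symmDiff_eq_pair {s t : Finset α} {a b : α}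
    (ha : a ∈ s) (hb : b ∈ t) (h : symmDiff s t = {a, b}) : s \ t = {a} := by
  ext x
  have := Finset.ext_iff.1 h
  simp only [mem_symmDiff, mem_insert, mem_singleton, mem_sdiff] at this ⊢
  grind

theorem map_symmDiff [DecidableEq β] (f : α ↪ β) (s t : Finset α) :
    (symmDiff s t).map f = symmDiff (s.map f) (t.map f) := by
  simp only [symmDiff_def, sup_eq_union, map_union, map_sdiff]

end Finset

theorem Int.units_prod_mul_prod_eq_prod_sdiff_mul_prod_sdiff {α : Type*} [DecidableEq α]
    (χ : α → ℤˣ) (s t : Finset α) :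
    (∏ v ∈ s, χ v) * ∏ v ∈ t, χ v = (∏ v ∈ s \ t, χ v) * ∏ v ∈ t \ s, χ v := by
  have := Finset.prod_sdiff_div_prod_sdiff (f := χ) (s₁ := t) (s₂ := s)
  simpa only [div_eq_mul_inv, Int.units_inv_eq_self] using this.symm

namespace SignedGraph

variable {V W X : Type*}

def SEq.iso {Γ Γ' : SignedGraph V} (h : Γ.SEq Γ') : Γ.Iso Γ' where
  toEquiv := Equiv.refl V
  adj_iff u v := by rw [h.1]; rfl
  sign_eq := h.2

def Iso.trans {Γ : SignedGraph V} {Γ' : SignedGraph W} {Γ'' : SignedGraph X}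
    (φ : Γ.Iso Γ') (ψ : Γ'.Iso Γ'') : Γ.Iso Γ'' where
  toEquiv := φ.toEquiv.trans ψ.toEquiv
  adj_iff u v := (φ.adj_iff u v).trans (ψ.adj_iff _ _)
  sign_eq u v huv := (φ.sign_eq u v huv).trans (ψ.sign_eq _ _ ((φ.adj_iff u v).1 huv))

noncomputable def switchingSign (U : Set V) (v : V) : ℤˣ := if v ∈ U then -1 else 1

theorem switch_sign (Γ : SignedGraph V) (U : Set V) (u v : V) :
    (Γ.switch U).sign u v = switchingSign U u * switchingSign U v * Γ.sign u v := rfl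

/-- The `k`-subsets `A` with `|A ∩ U|` odd. -/
def tokenSwitchingSet (U : Set V) (k : ℕ) : Set {A : Finset V // A.card = k} :=
  {A | ∏ v ∈ A.1, switchingSign U v = -1}

theorem switchingSign_tokenSwitchingSet (U : Set V) {k : ℕ} (A : {A : Finset V // A.card = k}) :
    switchingSign (tokenSwitchingSet U k) A = ∏ v ∈ A.1, switchingSign U v := by
  unfold switchingSign
  split_ifs with hA
  · exact hA.symm
  · exact ((Int.units_eq_one_or _).resolve_right hA).symm

def tokenEquiv (e : V ≃ W) (k : ℕ) :
    {A : Finset V // A.card = k} ≃ {A : Finset W // A.card = k} :=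
  e.finsetCongr.subtypeEquiv fun A => by simp

theorem tokenEquiv_symm (e : V ≃ W) (k : ℕ) : (tokenEquiv e k).symm = tokenEquiv e.symm k := by
  ext A : 2
  simp [tokenEquiv, Equiv.subtypeEquiv_symm, Equiv.finsetCongr_symm]

variable [DecidableEq V]

theorem token_sign_eq_of_symmDiff_eq_pair (Γ : SignedGraph V) {k : ℕ}
    {A B : {A : Finset V // A.card = k}} {a b : V} (ha : a ∈ A.1) (hb : b ∈ B.1)
    (hs : symmDiff A.1 B.1 = {a, b}) : (Γ.token k).sign A B = Γ.sign a b := by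
  have hs' : symmDiff B.1 A.1 = {b, a} := by rw [symmDiff_comm, hs, Finset.pair_comm]
  simp only [token, Finset.sdiff_eq_singleton_of_symmDiff_eq_pair ha hb hs,
    Finset.sdiff_eq_singleton_of_symmDiff_eq_pair hb ha hs', Finset.prod_singleton]

theorem switch_token_sEq (Γ : SignedGraph V) (U : Set V) (k : ℕ) :
    ((Γ.token k).switch (tokenSwitchingSet U k)).SEq ((Γ.switch U).token k) := by
  refine ⟨rfl, ?_⟩
  rintro A B ⟨a, b, ha, hb, -, hs⟩
  have hsAB := Finset.sdiff_eq_singleton_of_symmDiff_eq_pair ha hb hs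
  have hsBA := Finset.sdiff_eq_singleton_of_symmDiff_eq_pair hb ha
    (by rw [symmDiff_comm, hs, Finset.pair_comm])
  rw [switch_sign, token_sign_eq_of_symmDiff_eq_pair _ ha hb hs,
    token_sign_eq_of_symmDiff_eq_pair _ ha hb hs, switch_sign,
    switchingSign_tokenSwitchingSet, switchingSign_tokenSwitchingSet,
    Int.units_prod_mul_prod_eq_prod_sdiff_mul_prod_sdiff, hsAB, hsBA,
    Finset.prod_singleton, Finset.prod_singleton]

theorem neg_token_sEq (Γ : SignedGraph V) (k : ℕ) : (Γ.neg.token k).SEq (Γ.token k).neg := by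
  refine ⟨rfl, ?_⟩
  rintro A B ⟨a, b, ha, hb, -, hs⟩
  change _ = -_
  rw [token_sign_eq_of_symmDiff_eq_pair _ ha hb hs, token_sign_eq_of_symmDiff_eq_pair _ ha hb hs]
  rfl

variable [DecidableEq W]

theorem symmDiff_tokenEquiv_eq_pair (e : V ≃ W) {k : ℕ} {A B : {A : Finset V // A.card = k}}
    {a b : V} (hs : symmDiff A.1 B.1 = {a, b}) :
    symmDiff (tokenEquiv e k A).1 (tokenEquiv e k B).1 = {e a, e b} := by
  change symmDiff (A.1.map e.toEmbedding) (B.1.map e.toEmbedding) = _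
  rw [← Finset.map_symmDiff, hs, Finset.map_insert, Finset.map_singleton]
  rfl

theorem tokenAdj_tokenEquiv {G : SimpleGraph V} {G' : SimpleGraph W} (e : V ≃ W)
    (he : ∀ u v, G.Adj u v → G'.Adj (e u) (e v)) {k : ℕ} {A B : {A : Finset V // A.card = k}}
    (h : (tokenAdj G k).Adj A B) :
    (tokenAdj G' k).Adj (tokenEquiv e k A) (tokenEquiv e k B) := by
  obtain ⟨a, b, ha, hb, hab, hs⟩ := h
  exact ⟨e a, e b, Finset.mem_map_of_mem _ ha, Finset.mem_map_of_mem _ hb, he a b hab,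
    symmDiff_tokenEquiv_eq_pair e hs⟩

def Iso.token {Γ : SignedGraph V} {Γ' : SignedGraph W} (φ : Γ.Iso Γ') (k : ℕ) :
    (Γ.token k).Iso (Γ'.token k) where
  toEquiv := tokenEquiv φ.toEquiv k
  adj_iff A B := by
    refine ⟨tokenAdj_tokenEquiv _ fun u v => (φ.adj_iff u v).1, fun h => ?_⟩
    have := tokenAdj_tokenEquiv φ.toEquiv.symm
      (fun u v huv => (φ.adj_iff _ _).2 (by simpa using huv)) h
    rwa [← tokenEquiv_symm, Equiv.symm_apply_apply, Equiv.symm_apply_apply] at this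
  sign_eq := by
    rintro A B ⟨a, b, ha, hb, hab, hs⟩
    rw [token_sign_eq_of_symmDiff_eq_pair _ ha hb hs, φ.sign_eq a b hab,
      token_sign_eq_of_symmDiff_eq_pair _ (Finset.mem_map_of_mem _ ha)
        (Finset.mem_map_of_mem _ hb) (symmDiff_tokenEquiv_eq_pair _ hs)]

end SignedGraph

theorem token_signSymmetric_general {V : Type*} [DecidableEq V] (k : ℕ)
    (Γ : SignedGraph V) (h : Γ.SwitchIso Γ.neg) :
    (Γ.token k).SwitchIso ((Γ.token k).neg) := by
  obtain ⟨U, ⟨φ⟩⟩ := h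
  exact ⟨SignedGraph.tokenSwitchingSet U k,
    ⟨(Γ.switch_token_sEq U k).iso.trans ((φ.token k).trans (Γ.neg_token_sEq k).iso)⟩⟩

/-- if `Γ` is sign-symmetric then so is `F_k(Γ)`. -/
theorem token_signSymmetric {V : Type*} [Fintype V] [DecidableEq V] (n k : ℕ)
    (hn : Fintype.card V = n) (hk1 : 1 ≤ k) (hk2 : k ≤ n - 1)
    (Γ : SignedGraph V) (h : Γ.SwitchIso Γ.neg) :
    (Γ.token k).SwitchIso ((Γ.token k).neg) :=
  token_signSymmetric_general k Γ h
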